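/- arXiv:1909.05953 — 4 statements merged into one kernel-verified Lean document; each statement's English description precedes it below -/
import Mathlib

section
/- Let S be a finite set of open unit semicircles (open half-circles of the unit circle S^1). If the union of S covers a closed unit semicircle C̄, then there exists a subset R of S of cardinality 2 or 3 whose union still covers C̄. -/
open scoped RealInnerProductSpace

/-- The unit circle `S¹ ⊆ ℝ²`. -/
noncomputable def unitCircle : Set (EuclideanSpace ℝ (Fin 2)) := Metric.sphere 0 1

/-- The open unit semicircle of `S¹` determined by a (unit) vector `v`:
the open half of the circle on the positive side of the line through the
origin orthogonal to `v`, excluding its two endpoints. -/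
noncomputable def openSemicircle (v : EuclideanSpace ℝ (Fin 2)) :
    Set (EuclideanSpace ℝ (Fin 2)) := {x ∈ unitCircle | 0 < ⟪v, x⟫}

/-- The closed unit semicircle of `S¹` determined by a (unit) vector `v`,
including both endpoints. -/
noncomputable def closedSemicircle (v : EuclideanSpace ℝ (Fin 2)) :
    Set (EuclideanSpace ℝ (Fin 2)) := {x ∈ unitCircle | 0 ≤ ⟪v, x⟫}

/-! Parametrize the closed semicircle by `t ↦ cos t • u⊥ + sin t • u` on `[0, π]`, where
`u⊥ = rot90 u`. An open semicircle pulls back to an open interval of length `π`, so it suffices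
to cover `[0, π]` by three such intervals: take the interval containing `0` that reaches furthest
right, then one containing its right end (it cannot contain `0`, so it reaches `π`), then one
containing `π`. One interval never suffices, since no open semicircle contains both antipodal
endpoints `±u⊥`. -/

open Real Set

theorem exists_card_le_three_cover_Icc {ι : Type*} [DecidableEq ι] (S : Finset ι) (c : ι → ℝ)
    {r lo hi : ℝ} (hlen : hi ≤ lo + 2 * r)
    (hcover : ∀ t ∈ Icc lo hi, ∃ i ∈ S, t ∈ Ioo (c i - r) (c i + r)) :
    ∃ R ⊆ S, R.card ≤ 3 ∧ ∀ t ∈ Icc lo hi, ∃ i ∈ R, t ∈ Ioo (c i - r) (c i + r) := by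
  rcases lt_or_ge hi lo with hempty | hle
  · exact ⟨∅, Finset.empty_subset S, by simp, fun t ht => absurd (ht.1.trans ht.2) hempty.not_ge⟩
  obtain ⟨a, haA, ha_max⟩ := (S.filter fun i => lo ∈ Ioo (c i - r) (c i + r)).exists_max_image c
    (by simpa [Finset.filter_nonempty_iff] using hcover lo ⟨le_rfl, hle⟩)
  rw [Finset.mem_filter] at haA
  obtain ⟨b, hbS, hb⟩ := hcover hi ⟨hle, le_rfl⟩
  by_cases h_a_reaches : hi < c a + r
  · exact ⟨{a}, by simpa using haA.1, by simp, fun t ht =>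
      ⟨a, Finset.mem_singleton_self a, by linarith [haA.2.1, ht.1], by linarith [ht.2]⟩⟩
  replace h_a_reaches := not_lt.1 h_a_reaches
  obtain ⟨d, hdS, hd⟩ := hcover (c a + r) ⟨by linarith [haA.2.2], h_a_reaches⟩
  -- otherwise `d` would contain `lo` and reach further right than `a`
  have hd_reaches : hi ≤ c d + r := by
    by_contra! h
    have := ha_max d (Finset.mem_filter.2 ⟨hdS, by linarith [hd.2], by linarith [hd.2, haA.2.2]⟩)
    linarith [hd.2]
  refine ⟨{a, d, b}, ?_, Finset.card_le_three, fun t ht => ?_⟩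
  · simp [Finset.insert_subset_iff, haA.1, hdS, hbS]
  · rcases lt_or_ge t (c a + r) with h1 | h1
    · exact ⟨a, by simp, by linarith [haA.2.1, ht.1], h1⟩
    rcases lt_or_ge t (c d + r) with h2 | h2
    · exact ⟨d, by simp, by linarith [hd.1], h2⟩
    · exact ⟨b, by simp, by rw [le_antisymm ht.2 (by linarith)]; exact hb⟩

theorem exists_mem_Ico_cos_sin_eq {a b : ℝ} (h : a ^ 2 + b ^ 2 = 1) (c : ℝ) :
    ∃ φ ∈ Ico c (c + 2 * π), cos φ = a ∧ sin φ = b := by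
  set z : ℂ := ⟨a, b⟩
  have hz : ‖z‖ = 1 := by
    rw [Complex.norm_def, Complex.normSq_mk, ← sq, ← sq, h, Real.sqrt_one]
  refine ⟨toIcoMod two_pi_pos c z.arg, toIcoMod_mem_Ico _ _ _, ?_⟩
  rw [← sub_add_cancel (toIcoMod _ c _) z.arg, toIcoMod_sub_self, zsmul_eq_mul, add_comm,
    cos_add_int_mul_two_pi, sin_add_int_mul_two_pi]
  exact ⟨by simpa [hz] using z.norm_mul_cos_arg, by simpa [hz] using z.norm_mul_sin_arg⟩

theorem cos_pos_iff_mem_Ioo {s : ℝ} (h₁ : -(3 * π / 2) < s) (h₂ : s ≤ 3 * π / 2) :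
    0 < cos s ↔ s ∈ Ioo (-(π / 2)) (π / 2) := by
  refine ⟨fun hcos => ⟨?_, ?_⟩, cos_pos_of_mem_Ioo⟩
  · by_contra! hs
    have := cos_nonpos_of_pi_div_two_le_of_le (x := -s) (by linarith) (by linarith)
    rw [cos_neg] at this
    linarith
  · by_contra! hs
    linarith [cos_nonpos_of_pi_div_two_le_of_le hs (by linarith)]

local notation "ℝ²" => EuclideanSpace ℝ (Fin 2)

def rot90 (u : ℝ²) : ℝ² := !₂[-u 1, u 0]

theorem inner_rot90_self (u : ℝ²) : ⟪rot90 u, u⟫ = 0 := by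
  simp [rot90, PiLp.inner_apply, Fin.sum_univ_two]
  ring

theorem norm_rot90 (u : ℝ²) : ‖rot90 u‖ = ‖u‖ := by
  simp [EuclideanSpace.norm_eq, rot90, Fin.sum_univ_two, add_comm]

theorem inner_rot90_smul_add_inner_smul {u : ℝ²} (hu : ‖u‖ = 1) (x : ℝ²) :
    ⟪x, rot90 u⟫ • rot90 u + ⟪x, u⟫ • u = x := by
  have h : u 0 ^ 2 + u 1 ^ 2 = 1 := by
    simpa [hu, Fin.sum_univ_two] using (EuclideanSpace.real_norm_sq_eq u).symm
  ext i
  fin_cases i <;> simp [rot90, PiLp.inner_apply, Fin.sum_univ_two]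
  · linear_combination x 0 * h
  · linear_combination x 1 * h

theorem inner_eq_inner_rot90_mul_add {u : ℝ²} (hu : ‖u‖ = 1) (x y : ℝ²) :
    ⟪x, y⟫ = ⟪x, rot90 u⟫ * ⟪y, rot90 u⟫ + ⟪x, u⟫ * ⟪y, u⟫ := by
  conv_lhs => rw [← inner_rot90_smul_add_inner_smul hu y]
  rw [inner_add_right, real_inner_smul_right, real_inner_smul_right]
  ring

noncomputable def circleParam (u : ℝ²) (t : ℝ) : ℝ² := cos t • rot90 u + sin t • u

theorem inner_circleParam (u v : ℝ²) (t : ℝ) :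
    ⟪v, circleParam u t⟫ = cos t * ⟪v, rot90 u⟫ + sin t * ⟪v, u⟫ := by
  rw [circleParam, inner_add_right, real_inner_smul_right, real_inner_smul_right]

theorem inner_rot90_circleParam {u : ℝ²} (hu : ‖u‖ = 1) (t : ℝ) :
    ⟪rot90 u, circleParam u t⟫ = cos t := by
  rw [inner_circleParam, real_inner_self_eq_norm_sq, norm_rot90, hu, inner_rot90_self]
  ring

theorem inner_circleParam_self {u : ℝ²} (hu : ‖u‖ = 1) (t : ℝ) :
    ⟪u, circleParam u t⟫ = sin t := by
  rw [inner_circleParam, real_inner_comm, inner_rot90_self, real_inner_self_eq_norm_sq, hu]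
  ring

theorem circleParam_mem_unitCircle {u : ℝ²} (hu : ‖u‖ = 1) (t : ℝ) :
    circleParam u t ∈ unitCircle := by
  have h := inner_eq_inner_rot90_mul_add hu (circleParam u t) (circleParam u t)
  rw [real_inner_comm (rot90 u), inner_rot90_circleParam hu, real_inner_comm u,
    inner_circleParam_self hu, ← sq, ← sq, cos_sq_add_sin_sq, real_inner_self_eq_norm_sq] at h
  exact mem_sphere_zero_iff_norm.2 ((pow_eq_one_iff_of_nonneg (norm_nonneg _) two_ne_zero).1 h)

theorem closedSemicircle_eq_image_circleParam {u : ℝ²} (hu : ‖u‖ = 1) :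
    closedSemicircle u = circleParam u '' Icc 0 π := by
  ext x
  constructor
  · rintro ⟨hx, hxu⟩
    set a := ⟪x, rot90 u⟫
    set b := ⟪x, u⟫
    have hab : a ^ 2 + b ^ 2 = 1 := by
      have h := inner_eq_inner_rot90_mul_add hu x x
      rwa [real_inner_self_eq_norm_sq, mem_sphere_zero_iff_norm.1 hx, ← sq, ← sq, one_pow,
        eq_comm] at h
    have ha : a ∈ Icc (-1) 1 := by constructor <;> nlinarith
    refine ⟨arccos a, ⟨arccos_nonneg a, arccos_le_pi a⟩, ?_⟩
    have hsin : sin (arccos a) = b := by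
      rw [sin_arccos, show 1 - a ^ 2 = b ^ 2 by linarith,
        sqrt_sq (by rwa [real_inner_comm] at hxu)]
    rw [circleParam, cos_arccos ha.1 ha.2, hsin, inner_rot90_smul_add_inner_smul hu]
  · rintro ⟨t, ht, rfl⟩
    exact ⟨circleParam_mem_unitCircle hu t, by
      rw [inner_circleParam_self hu]; exact sin_nonneg_of_nonneg_of_le_pi ht.1 ht.2⟩

theorem exists_forall_circleParam_mem_openSemicircle_iff {u v : ℝ²} (hu : ‖u‖ = 1)
    (hv : ‖v‖ = 1) : ∃ φ : ℝ, ∀ t ∈ Icc 0 π,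
      circleParam u t ∈ openSemicircle v ↔ t ∈ Ioo (φ - π / 2) (φ + π / 2) := by
  have hv' : ⟪v, rot90 u⟫ ^ 2 + ⟪v, u⟫ ^ 2 = 1 := by
    have h := inner_eq_inner_rot90_mul_add hu v v
    rwa [real_inner_self_eq_norm_sq, hv, ← sq, ← sq, one_pow, eq_comm] at h
  -- for `φ ∈ [-π/2, 3π/2)`, `t - φ` stays in `(-3π/2, 3π/2]`, where `cos > 0` only near `0`
  obtain ⟨φ, hφ, hcos, hsin⟩ := exists_mem_Ico_cos_sin_eq hv' (-(π / 2))
  refine ⟨φ, fun t ht => ?_⟩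
  have hinner : ⟪v, circleParam u t⟫ = cos (t - φ) := by
    rw [inner_circleParam, cos_sub, hcos, hsin, mul_comm (cos t), mul_comm (sin t)]
  have hmem : circleParam u t ∈ openSemicircle v ↔ 0 < ⟪v, circleParam u t⟫ :=
    and_iff_right (circleParam_mem_unitCircle hu t)
  rw [hmem, hinner, cos_pos_iff_mem_Ioo (by linarith [hφ.2, ht.1]) (by linarith [hφ.1, ht.2])]
  simp only [mem_Ioo]
  constructor <;> rintro ⟨h₁, h₂⟩ <;> constructor <;> linarith

theorem two_le_card_of_closedSemicircle_subset {u : ℝ²} (hu : ‖u‖ = 1) {R : Finset ℝ²}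
    (hR : closedSemicircle u ⊆ ⋃ v ∈ R, openSemicircle v) : 2 ≤ R.card := by
  have hC := closedSemicircle_eq_image_circleParam hu
  obtain ⟨v, hvR, -, hv⟩ := mem_iUnion₂.1 (hR (hC ▸ mem_image_of_mem _ ⟨le_rfl, pi_pos.le⟩ :
    circleParam u 0 ∈ closedSemicircle u))
  obtain ⟨w, hwR, -, hw⟩ := mem_iUnion₂.1 (hR (hC ▸ mem_image_of_mem _ ⟨pi_pos.le, le_rfl⟩ :
    circleParam u π ∈ closedSemicircle u))
  rw [inner_circleParam, cos_zero, sin_zero] at hv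
  rw [inner_circleParam, cos_pi, sin_pi] at hw
  by_contra! hcard
  obtain rfl := Finset.card_le_one.1 (Nat.le_of_lt_succ hcard) v hvR w hwR
  linarith

/-- If a finite set of open unit semicircles covers a closed unit semicircle,
then two or three of them already cover it. -/
theorem semicircles_cover_closed_semicircle
    (S : Finset (EuclideanSpace ℝ (Fin 2))) (hS : ∀ v ∈ S, ‖v‖ = 1)
    (u : EuclideanSpace ℝ (Fin 2)) (hu : ‖u‖ = 1)
    (hcover : closedSemicircle u ⊆ ⋃ v ∈ S, openSemicircle v) :
    ∃ R ⊆ S, (R.card = 2 ∨ R.card = 3) ∧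
      closedSemicircle u ⊆ ⋃ v ∈ R, openSemicircle v := by
  classical
  choose! φ hφ using fun v (hv : v ∈ S) =>
    exists_forall_circleParam_mem_openSemicircle_iff hu (hS v hv)
  have hC := closedSemicircle_eq_image_circleParam hu
  have hcover_Icc : ∀ t ∈ Icc 0 π, ∃ v ∈ S, t ∈ Ioo (φ v - π / 2) (φ v + π / 2) := by
    intro t ht
    obtain ⟨v, hvS, hv⟩ := mem_iUnion₂.1 (hcover (hC ▸ mem_image_of_mem _ ht))
    exact ⟨v, hvS, (hφ v hvS t ht).1 hv⟩
  obtain ⟨R, hRS, hR3, hR⟩ := exists_card_le_three_cover_Icc S φ (by linarith) hcover_Icc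
  have hR_cover : closedSemicircle u ⊆ ⋃ v ∈ R, openSemicircle v := by
    rw [hC]
    rintro _ ⟨t, ht, rfl⟩
    obtain ⟨v, hvR, hv⟩ := hR t ht
    exact mem_iUnion₂.2 ⟨v, hvR, (hφ v (hRS hvR) t ht).2 hv⟩
  have hR2 := two_le_card_of_closedSemicircle_subset hu hR_cover
  exact ⟨R, hRS, by omega, hR_cover⟩
end

section
/- A set R of four open unit semicircles that covers the unit circle S^1 is minimal (i.e., removing any one member yields a family that no longer covers S^1) if and only if R consists of two antipodal pairs of open unit semicircles. -/
open scoped RealInnerProductSpace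

noncomputable local instance : DecidableEq (EuclideanSpace ℝ (Fin 2)) :=
  Classical.decEq _

/-
Write each unit vector as `(cos t, sin t)` and sort the four angles `t₀ ≤ t₁ ≤ t₂ ≤ t₃` in
`(-π, π]`. Minimality gives, for each `tᵢ`, an open semicircle containing `tᵢ` and no other angle.
Such a semicircle cannot fit between the two cyclic neighbours of `tᵢ`, so these are at least `π`
apart: `t₂ - t₀ ≥ π`, `t₃ - t₁ ≥ π`, `t₀ + 2π - t₂ ≥ π`, `t₁ + 2π - t₃ ≥ π`. The four
inequalities add up to an equality, hence `t₂ = t₀ + π` and `t₃ = t₁ + π`.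
Conversely, removing one vector from `{v, -v, w, -w}` leaves `±q` and one more vector `p`, and a
unit vector orthogonal to `q` on the far side of `p` is uncovered.
-/

open Real Finset

local notation "ℝ²" => EuclideanSpace ℝ (Fin 2)

lemma cos_sub_pos_or_cos_sub_pos {a b c u : ℝ} (hab : a ≤ b) (hbc : b ≤ c) (hac : c - a < π)
    (hb : 0 < cos (u - b)) : 0 < cos (u - a) ∨ 0 < cos (u - c) := by
  obtain ⟨d, hd, hcos⟩ : ∃ d, |d| < π / 2 ∧ ∀ x, cos (u - x) = cos (d + (b - x)) := by
    refine ⟨((u - b : ℝ) : Angle).toReal, ?_, fun x => ?_⟩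
    · rwa [← Angle.cos_pos_iff_abs_toReal_lt_pi_div_two, Angle.cos_coe]
    · rw [← Angle.cos_coe, ← Angle.cos_coe, Angle.coe_add, Angle.coe_toReal, ← Angle.coe_add,
        sub_add_sub_cancel]
  obtain ⟨hd₁, hd₂⟩ := abs_lt.1 hd
  rw [hcos a, hcos c]
  by_cases h : d + (b - a) < π / 2
  · exact Or.inl (cos_pos_of_mem_Ioo ⟨by linarith, h⟩)
  · exact Or.inr (cos_pos_of_mem_Ioo ⟨by linarith, by linarith⟩)

lemma pi_le_sub_of_cos_sub_pos {a b c u : ℝ} (hab : a ≤ b) (hbc : b ≤ c) (hb : 0 < cos (u - b))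
    (ha : cos (u - a) ≤ 0) (hc : cos (u - c) ≤ 0) : π ≤ c - a := by
  by_contra! hac
  rcases cos_sub_pos_or_cos_sub_pos hab hbc hac hb with h | h <;> linarith

lemma eq_add_pi_of_forall_exists_cos_sub_pos (t : Fin 4 → ℝ) (hmono : Monotone t)
    (hwin : t 3 ≤ t 0 + 2 * π)
    (hpriv : ∀ i, ∃ u, 0 < cos (u - t i) ∧ ∀ j ≠ i, cos (u - t j) ≤ 0) :
    t 2 = t 0 + π ∧ t 3 = t 1 + π := by
  have m01 : t 0 ≤ t 1 := hmono (by decide)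
  have m12 : t 1 ≤ t 2 := hmono (by decide)
  have m23 : t 2 ≤ t 3 := hmono (by decide)
  have cos_sub_add_two_pi (u s : ℝ) : cos (u - (s + 2 * π)) = cos (u - s) := by
    rw [← sub_sub, cos_sub_two_pi]
  obtain ⟨u₀, p₀, n₀⟩ := hpriv 0
  obtain ⟨u₁, p₁, n₁⟩ := hpriv 1
  obtain ⟨u₂, p₂, n₂⟩ := hpriv 2
  obtain ⟨u₃, p₃, n₃⟩ := hpriv 3
  have g₀ : π ≤ t 1 - (t 3 - 2 * π) := pi_le_sub_of_cos_sub_pos (by linarith) m01 p₀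
    (by rw [← cos_sub_add_two_pi, sub_add_cancel]; exact n₀ 3 (by decide)) (n₀ 1 (by decide))
  have g₁ : π ≤ t 2 - t 0 :=
    pi_le_sub_of_cos_sub_pos m01 m12 p₁ (n₁ 0 (by decide)) (n₁ 2 (by decide))
  have g₂ : π ≤ t 3 - t 1 :=
    pi_le_sub_of_cos_sub_pos m12 m23 p₂ (n₂ 1 (by decide)) (n₂ 3 (by decide))
  have g₃ : π ≤ t 0 + 2 * π - t 2 := pi_le_sub_of_cos_sub_pos m23 hwin p₃ (n₃ 2 (by decide))
    (by rw [cos_sub_add_two_pi]; exact n₃ 0 (by decide))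
  constructor <;> linarith

noncomputable def circlePoint (θ : ℝ) : ℝ² := !₂[cos θ, sin θ]

@[simp] lemma mem_unitCircle {x : ℝ²} : x ∈ unitCircle ↔ ‖x‖ = 1 := mem_sphere_zero_iff_norm

lemma circlePoint_mem_unitCircle (θ : ℝ) : circlePoint θ ∈ unitCircle := by
  simp [circlePoint, EuclideanSpace.norm_eq, Fin.sum_univ_two]

lemma inner_circlePoint (θ φ : ℝ) : ⟪circlePoint θ, circlePoint φ⟫ = cos (φ - θ) := by
  simp [circlePoint, PiLp.inner_apply, Fin.sum_univ_two, cos_sub]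

lemma circlePoint_add_pi (θ : ℝ) : circlePoint (θ + π) = -circlePoint θ := by
  ext i; fin_cases i <;> simp [circlePoint]

lemma exists_circlePoint_eq {x : ℝ²} (hx : x ∈ unitCircle) :
    ∃ θ ∈ Set.Ioc (-π) π, circlePoint θ = x := by
  set z : ℂ := ⟨x 0, x 1⟩
  have hz : ‖z‖ = 1 := by
    rw [mem_unitCircle, EuclideanSpace.norm_eq] at hx
    simpa [Complex.norm_def, Complex.normSq, z, Fin.sum_univ_two, pow_two] using hx
  have hz0 : z ≠ 0 := fun h => by simp [h] at hz
  refine ⟨z.arg, Complex.arg_mem_Ioc z, ?_⟩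
  ext i; fin_cases i
  · simp [circlePoint, Complex.cos_arg hz0, hz, z]
  · simp [circlePoint, Complex.sin_arg, hz, z]

lemma exists_monotone_angles {n : ℕ} (R : Finset ℝ²) (hR : ∀ v ∈ R, ‖v‖ = 1)
    (hn : R.card = n) :
    ∃ t : Fin n → ℝ, Monotone t ∧ (∀ i, t i ∈ Set.Ioc (-π) π) ∧
      Function.Injective (circlePoint ∘ t) ∧ R = univ.image (circlePoint ∘ t) := by
  let e : Fin n ≃ R := (R.equivFin.trans (finCongr hn)).symm
  choose θ hθ hθe using fun i => exists_circlePoint_eq (mem_unitCircle.2 (hR _ (e i).2))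
  let σ := Tuple.sort θ
  have hpoint : circlePoint ∘ θ ∘ σ = Subtype.val ∘ e ∘ σ := funext fun i => hθe (σ i)
  refine ⟨θ ∘ σ, Tuple.monotone_sort θ, fun i => hθ _, ?_, ?_⟩
  · rw [hpoint]
    exact Subtype.val_injective.comp (e.injective.comp σ.injective)
  · rw [hpoint]
    ext v
    simp only [mem_image, mem_univ, true_and, Function.comp_apply]
    refine ⟨fun hv => ⟨σ.symm (e.symm ⟨v, hv⟩), by simp⟩, ?_⟩
    rintro ⟨i, rfl⟩
    exact (e (σ i)).2

lemma exists_inner_pos_of_not_covered_erase {R : Finset ℝ²} {s : ℝ²}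
    (hcover : unitCircle ⊆ ⋃ v ∈ R, openSemicircle v)
    (hmin : ¬ unitCircle ⊆ ⋃ v ∈ R.erase s, openSemicircle v) :
    ∃ x ∈ unitCircle, 0 < ⟪s, x⟫ ∧ ∀ v ∈ R.erase s, ⟪v, x⟫ ≤ 0 := by
  obtain ⟨x, hx, hxs⟩ := Set.not_subset.1 hmin
  simp only [Set.mem_iUnion, exists_prop, not_exists, not_and] at hxs
  have hout : ∀ v ∈ R.erase s, ⟪v, x⟫ ≤ 0 := fun v hv => not_lt.1 fun h => hxs v hv ⟨hx, h⟩
  obtain ⟨v, hv, -, hxv⟩ := Set.mem_iUnion₂.1 (hcover hx)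
  obtain rfl : v = s := by_contra fun hvs => not_lt.2 (hout v (mem_erase.2 ⟨hvs, hv⟩)) hxv
  exact ⟨x, hx, hxv, hout⟩

lemma not_covered_of_subset_insert_antipodal {S : Finset ℝ²} {p q : ℝ²} (hq : q ∈ unitCircle)
    (hS : S ⊆ {p, q, -q}) : ¬ unitCircle ⊆ ⋃ v ∈ S, openSemicircle v := by
  obtain ⟨θ, -, rfl⟩ := exists_circlePoint_eq hq
  obtain ⟨x, hx, hpx, hqx⟩ : ∃ x ∈ unitCircle, ⟪p, x⟫ ≤ 0 ∧ ⟪circlePoint θ, x⟫ = 0 := by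
    have hy := circlePoint_mem_unitCircle (θ + π / 2)
    have hqy : ⟪circlePoint θ, circlePoint (θ + π / 2)⟫ = 0 := by simp [inner_circlePoint]
    rcases le_or_gt ⟪p, circlePoint (θ + π / 2)⟫ 0 with h | h
    · exact ⟨_, hy, h, hqy⟩
    · exact ⟨-circlePoint (θ + π / 2), by simpa using hy, by simp [inner_neg_right, h.le],
        by simp [inner_neg_right, hqy]⟩
  intro hcover
  obtain ⟨v, hv, -, hxv⟩ := Set.mem_iUnion₂.1 (hcover hx)
  rcases mem_insert.1 (hS hv) with rfl | hv
  · exact not_lt.2 hpx hxv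
  rcases mem_insert.1 hv with rfl | hv
  · exact hqx.not_gt hxv
  rw [mem_singleton.1 hv, inner_neg_left, hqx, neg_zero] at hxv
  exact hxv.false

lemma exists_eq_antipodal_pairs_of_minimal_cover {R : Finset ℝ²} (hR : ∀ v ∈ R, ‖v‖ = 1)
    (hcard : R.card = 4) (hcover : unitCircle ⊆ ⋃ v ∈ R, openSemicircle v)
    (hmin : ∀ s ∈ R, ¬ unitCircle ⊆ ⋃ v ∈ R.erase s, openSemicircle v) :
    ∃ v w : ℝ², R = {v, -v, w, -w} := by
  obtain ⟨t, hmono, ht, hinj, rfl⟩ := exists_monotone_angles R hR hcard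
  have hpriv : ∀ i, ∃ u, 0 < cos (u - t i) ∧ ∀ j ≠ i, cos (u - t j) ≤ 0 := by
    intro i
    obtain ⟨x, hx, hpos, hneg⟩ :=
      exists_inner_pos_of_not_covered_erase hcover (hmin _ (mem_image_of_mem _ (mem_univ i)))
    obtain ⟨u, -, rfl⟩ := exists_circlePoint_eq hx
    refine ⟨u, by simpa [inner_circlePoint] using hpos, fun j hj => ?_⟩
    simpa [inner_circlePoint] using
      hneg _ (mem_erase.2 ⟨hinj.ne hj, mem_image_of_mem _ (mem_univ j)⟩)
  obtain ⟨h2, h3⟩ := eq_add_pi_of_forall_exists_cos_sub_pos t hmono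
    (by linarith [(ht 0).1, (ht 3).2]) hpriv
  refine ⟨circlePoint (t 0), circlePoint (t 1), ?_⟩
  rw [show (univ : Finset (Fin 4)) = {0, 1, 2, 3} by decide]
  simp only [image_insert, image_singleton, Function.comp_apply, h2, h3, circlePoint_add_pi]
  rw [insert_comm (circlePoint (t 1)) (-circlePoint (t 0))]

lemma not_covered_erase_antipodal_pairs {v w s : ℝ²} (hv : ‖v‖ = 1) (hw : ‖w‖ = 1)
    (hs : s ∈ ({v, -v, w, -w} : Finset ℝ²)) :
    ¬ unitCircle ⊆ ⋃ u ∈ ({v, -v, w, -w} : Finset ℝ²).erase s, openSemicircle u := by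
  rw [← mem_unitCircle] at hv hw
  simp only [mem_insert, mem_singleton] at hs
  rcases hs with rfl | rfl | rfl | rfl
  · exact not_covered_of_subset_insert_antipodal (p := -s) hw fun u => by
      simp only [mem_erase, mem_insert, mem_singleton]; tauto
  · exact not_covered_of_subset_insert_antipodal (p := v) hw fun u => by
      simp only [mem_erase, mem_insert, mem_singleton]; tauto
  · exact not_covered_of_subset_insert_antipodal (p := -s) hv fun u => by
      simp only [mem_erase, mem_insert, mem_singleton]; tauto
  · exact not_covered_of_subset_insert_antipodal (p := w) hv fun u => by
      simp only [mem_erase, mem_insert, mem_singleton]; tauto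

/-- A set of four open unit semicircles covering `S¹` is a minimal cover
(removing any member destroys the covering property) iff it consists of two
antipodal pairs of open unit semicircles. -/
theorem four_semicircle_cover_minimal_iff
    (R : Finset (EuclideanSpace ℝ (Fin 2))) (hR : ∀ v ∈ R, ‖v‖ = 1)
    (hcard : R.card = 4)
    (hcover : unitCircle ⊆ ⋃ v ∈ R, openSemicircle v) :
    (∀ s ∈ R, ¬ unitCircle ⊆ ⋃ v ∈ R.erase s, openSemicircle v) ↔
      ∃ v w : EuclideanSpace ℝ (Fin 2), R = {v, -v, w, -w} := by
  refine ⟨exists_eq_antipodal_pairs_of_minimal_cover hR hcard hcover, ?_⟩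
  rintro ⟨v, w, rfl⟩ s hs
  exact not_covered_erase_antipodal_pairs (hR v (by simp)) (hR w (by simp)) hs
end

section
/- Let S be a set of at least 5 distinct open unit semicircles whose union covers the unit circle S^1. Then there exists a subset R ⊂ S with |R| = 3 whose union covers S^1. -/
/-!
Write the semicircles and the points of `S¹` in polar angles: the semicircle centred at angle `θ`
contains the point at angle `φ` iff `cos (φ - θ) > 0`, so the semicircles cover `S¹` iff every
open arc of length `π` contains a centre. Let `m` be the least centre and `p` the last centre in
`(m, m + π)`. If some centre `q` lies in `(m + π, p + π)`, then `{m, p, q}` covers. Otherwise the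
centre in `(p, p + π)` is `m + π`; if some centre `r` lies beyond `p + π`, then `{p, m + π, r}`
covers. Otherwise `p + π` is a centre and every centre other than `m, p, m + π, p + π` lies in
`(m, p)`, so a fifth centre `s` gives the cover `{s, m + π, p + π}`.
-/

open scoped RealInnerProductSpace

open Real Finset

noncomputable def unitVec (θ : ℝ) : EuclideanSpace ℝ (Fin 2) :=
  Complex.orthonormalBasisOneI.repr (Complex.exp (θ * Complex.I))

noncomputable def polarAngle (v : EuclideanSpace ℝ (Fin 2)) : ℝ :=
  (Complex.orthonormalBasisOneI.repr.symm v).arg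

theorem norm_unitVec (θ : ℝ) : ‖unitVec θ‖ = 1 := by
  rw [unitVec, LinearIsometryEquiv.norm_map, Complex.norm_exp_ofReal_mul_I]

theorem inner_unitVec_unitVec (α β : ℝ) : ⟪unitVec α, unitVec β⟫ = cos (β - α) := by
  rw [unitVec, unitVec, LinearIsometryEquiv.inner_map_map, Complex.inner, ← Complex.exp_conj,
    map_mul, Complex.conj_ofReal, Complex.conj_I, ← Complex.exp_add,
    show β * Complex.I + α * -Complex.I = ((β - α : ℝ) : ℂ) * Complex.I by push_cast; ring,
    Complex.exp_ofReal_mul_I_re]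

theorem unitVec_polarAngle {v : EuclideanSpace ℝ (Fin 2)} (hv : ‖v‖ = 1) :
    unitVec (polarAngle v) = v := by
  have h := Complex.norm_mul_exp_arg_mul_I (Complex.orthonormalBasisOneI.repr.symm v)
  rw [LinearIsometryEquiv.norm_map, hv, Complex.ofReal_one, one_mul] at h
  rw [unitVec, polarAngle, h, LinearIsometryEquiv.apply_symm_apply]

theorem polarAngle_lt_polarAngle_add_two_pi (v w : EuclideanSpace ℝ (Fin 2)) :
    polarAngle w < polarAngle v + 2 * π := by
  rw [polarAngle, polarAngle]
  linarith [Complex.neg_pi_lt_arg (Complex.orthonormalBasisOneI.repr.symm v),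
    Complex.arg_le_pi (Complex.orthonormalBasisOneI.repr.symm w)]

def AnglesCover (A : Finset ℝ) : Prop := ∀ φ : ℝ, ∃ θ ∈ A, 0 < cos (φ - θ)

theorem AnglesCover.exists_mem_Ioo {A : Finset ℝ} (hc : AnglesCover A) {x : ℝ}
    (hA : ∀ θ ∈ A, x - π ≤ θ ∧ θ ≤ x + 2 * π) :
    ∃ θ ∈ A, x < θ ∧ θ < x + π := by
  obtain ⟨θ, hθA, hpos⟩ := hc (x + π / 2)
  obtain ⟨h₁, h₂⟩ := hA θ hθA
  refine ⟨θ, hθA, ?_, ?_⟩ <;> by_contra! h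
  · exact hpos.not_ge (cos_nonpos_of_pi_div_two_le_of_le (by linarith) (by linarith))
  · rw [← cos_neg, neg_sub] at hpos
    exact hpos.not_ge (cos_nonpos_of_pi_div_two_le_of_le (by linarith) (by linarith))

theorem anglesCover_of_gaps_lt_pi {a b c : ℝ}
    (hba : b - a < π) (hcb : c - b < π) (hac : a + 2 * π - c < π) : AnglesCover {a, b, c} := by
  intro φ
  set ψ := toIcoMod two_pi_pos a φ
  have hψ : ψ ∈ Set.Ico a (a + 2 * π) := toIcoMod_mem_Ico two_pi_pos a φ
  have hcos (θ : ℝ) : cos (φ - θ) = cos (ψ - θ) := by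
    rw [← toIcoMod_add_toIcoDiv_mul two_pi_pos a φ]
    exact (cos_periodic.sub_const θ).int_mul _ _
  simp only [mem_insert, mem_singleton, exists_eq_or_imp, exists_eq_left, hcos]
  have cos_pos {x : ℝ} (h₁ : -(π / 2) < x) (h₂ : x < π / 2) : 0 < cos x :=
    cos_pos_of_mem_Ioo ⟨h₁, h₂⟩
  by_cases h₁ : ψ < (a + b) / 2
  · exact Or.inl (cos_pos (by linarith [hψ.1]) (by linarith))
  by_cases h₂ : ψ < (b + c) / 2
  · exact Or.inr (Or.inl (cos_pos (by linarith) (by linarith)))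
  by_cases h₃ : ψ < (c + a + 2 * π) / 2
  · exact Or.inr (Or.inr (cos_pos (by linarith) (by linarith)))
  · left
    rw [← cos_sub_two_pi]
    exact cos_pos (by linarith) (by linarith [hψ.2])

theorem exists_subset_card_eq_three_anglesCover {A : Finset ℝ} {a b c : ℝ} (ha : a ∈ A)
    (hb : b ∈ A) (hc : c ∈ A) (hab : a < b) (hbc : b < c) (hba : b - a < π) (hcb : c - b < π)
    (hac : a + 2 * π - c < π) : ∃ B ⊆ A, #B = 3 ∧ AnglesCover B :=
  ⟨{a, b, c}, by simp [insert_subset_iff, ha, hb, hc],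
    card_eq_three.2 ⟨a, b, c, hab.ne, (hab.trans hbc).ne, hbc.ne, rfl⟩,
    anglesCover_of_gaps_lt_pi hba hcb hac⟩

theorem AnglesCover.exists_card_eq_three_of_mem_of_subset_Ico {A : Finset ℝ} (hc : AnglesCover A)
    {m : ℝ} (hm : m ∈ A) (hA : (A : Set ℝ) ⊆ Set.Ico m (m + 2 * π)) (hcard : 5 ≤ #A) :
    ∃ B ⊆ A, #B = 3 ∧ AnglesCover B := by
  have hπ := pi_pos
  have hwindow {x : ℝ} (h₁ : m ≤ x) (h₂ : x ≤ m + π) (θ : ℝ) (hθ : θ ∈ A) :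
      x - π ≤ θ ∧ θ ≤ x + 2 * π := by
    constructor <;> linarith [(hA hθ).1, (hA hθ).2]
  have hne : (A.filter (fun θ ↦ m < θ ∧ θ < m + π)).Nonempty := by
    obtain ⟨θ, hθ, h⟩ := hc.exists_mem_Ioo (hwindow le_rfl (by linarith))
    exact ⟨θ, mem_filter.2 ⟨hθ, h⟩⟩
  obtain ⟨p, hp, hpmax⟩ := exists_max_image _ id hne
  simp only [mem_filter, id, and_imp] at hp hpmax
  obtain ⟨hpA, hmp, hpm⟩ := hp
  by_cases hq : ∃ q ∈ A, m + π < q ∧ q < p + π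
  · obtain ⟨q, hqA, hmq, hqp⟩ := hq
    exact exists_subset_card_eq_three_anglesCover hm hpA hqA hmp (by linarith) (by linarith)
      (by linarith) (by linarith [(hA hqA).2])
  push Not at hq
  have hmπ : m + π ∈ A := by
    obtain ⟨q, hqA, hpq, hqp⟩ := hc.exists_mem_Ioo (hwindow hmp.le hpm.le)
    have hmq : m + π ≤ q := le_of_not_gt fun h ↦ (hpmax q hqA (by linarith) h).not_gt hpq
    exact le_antisymm (le_of_not_gt fun h ↦ (hq q hqA h).not_gt hqp) hmq ▸ hqA
  by_cases hr : ∃ r ∈ A, p + π < r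
  · obtain ⟨r, hrA, hpr⟩ := hr
    exact exists_subset_card_eq_three_anglesCover hpA hmπ hrA (by linarith) (by linarith)
      (by linarith) (by linarith [(hA hrA).2]) (by linarith)
  push Not at hr
  have hpπ : p + π ∈ A := by
    obtain ⟨r, hrA, hmr, hrm⟩ := hc.exists_mem_Ioo (hwindow (by linarith) le_rfl)
    exact le_antisymm (hr r hrA) (hq r hrA hmr) ▸ hrA
  obtain ⟨s, hsA, hs⟩ : ∃ s ∈ A, s ∉ ({m, p, m + π, p + π} : Finset ℝ) :=
    exists_mem_notMem_of_card_lt_card (card_le_four.trans_lt hcard)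
  simp only [mem_insert, mem_singleton, not_or] at hs
  obtain ⟨hsm, hsp, hsmπ, hspπ⟩ := hs
  have hms : m < s := (hA hsA).1.lt_of_ne' hsm
  have hsmπ' : s < m + π := by
    refine lt_of_le_of_ne (le_of_not_gt fun h ↦ ?_) hsmπ
    linarith [hq s hsA h, (hr s hsA).lt_of_ne hspπ]
  have hsp' : s < p := (hpmax s hsA hms hsmπ').lt_of_ne hsp
  exact exists_subset_card_eq_three_anglesCover hsA hmπ hpπ (by linarith) (by linarith)
    (by linarith) (by linarith) (by linarith)

theorem AnglesCover.exists_card_eq_three {A : Finset ℝ} (hc : AnglesCover A)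
    (hA : ∀ a ∈ A, ∀ b ∈ A, b < a + 2 * π) (hcard : 5 ≤ #A) :
    ∃ B ⊆ A, #B = 3 ∧ AnglesCover B := by
  have hne : A.Nonempty := card_pos.1 (by omega)
  exact hc.exists_card_eq_three_of_mem_of_subset_Ico (A.min'_mem hne)
    (fun θ hθ ↦ ⟨A.min'_le θ hθ, hA _ (A.min'_mem hne) θ hθ⟩) hcard

theorem unitCircle_subset_iUnion_openSemicircle_iff {S : Finset (EuclideanSpace ℝ (Fin 2))}
    (hS : ∀ v ∈ S, ‖v‖ = 1) :
    unitCircle ⊆ ⋃ v ∈ S, openSemicircle v ↔ AnglesCover (S.image polarAngle) := by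
  classical
  have hinner {v} (hv : v ∈ S) (φ : ℝ) : ⟪v, unitVec φ⟫ = cos (φ - polarAngle v) := by
    have h := inner_unitVec_unitVec (polarAngle v) φ
    rwa [unitVec_polarAngle (hS v hv)] at h
  simp only [AnglesCover, exists_mem_image]
  constructor
  · intro h φ
    have hφ : unitVec φ ∈ unitCircle := mem_sphere_zero_iff_norm.2 (norm_unitVec φ)
    obtain ⟨v, hv, -, hpos⟩ := Set.mem_iUnion₂.1 (h hφ)
    exact ⟨v, hv, hinner hv φ ▸ hpos⟩
  · intro h x hx
    obtain ⟨v, hv, hpos⟩ := h (polarAngle x)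
    refine Set.mem_iUnion₂.2 ⟨v, hv, hx, ?_⟩
    rwa [← unitVec_polarAngle (mem_sphere_zero_iff_norm.1 hx), hinner hv]

/-- If at least five distinct open unit semicircles cover `S¹`, then some
three of them already cover `S¹`. -/
theorem three_of_five_semicircles_cover
    (S : Finset (EuclideanSpace ℝ (Fin 2))) (hS : ∀ v ∈ S, ‖v‖ = 1)
    (hcard : 5 ≤ S.card)
    (hcover : unitCircle ⊆ ⋃ v ∈ S, openSemicircle v) :
    ∃ R ⊆ S, R.card = 3 ∧ unitCircle ⊆ ⋃ v ∈ R, openSemicircle v := by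
  classical
  have hinj : Set.InjOn polarAngle S := fun v hv w hw h ↦ by
    rw [← unitVec_polarAngle (hS v hv), h, unitVec_polarAngle (hS w hw)]
  have hwindow : ∀ a ∈ S.image polarAngle, ∀ b ∈ S.image polarAngle, b < a + 2 * π := by
    simp only [mem_image, forall_exists_index, and_imp, forall_apply_eq_imp_iff₂]
    exact fun v _ w _ ↦ polarAngle_lt_polarAngle_add_two_pi v w
  obtain ⟨B, hBS, hB, hBcover⟩ :=
    ((unitCircle_subset_iUnion_openSemicircle_iff hS).1 hcover).exists_card_eq_three hwindow
      (by rwa [card_image_of_injOn hinj])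
  obtain ⟨R, hRS, rfl⟩ := subset_image_iff.1 hBS
  rw [card_image_of_injOn (hinj.mono (coe_subset.2 hRS))] at hB
  exact ⟨R, hRS, hB,
    (unitCircle_subset_iUnion_openSemicircle_iff fun v hv ↦ hS v (hRS hv)).2 hBcover⟩
end

section
/- Let f be a facet of a convex polyhedron P and suppose every open hemisphere in the minimal covering set R of the closed hemisphere S^2 \ h(f) is pairwise non-antipodal with at most one exception; if a facet f' of P has three pairwise non-parallel neighboring facets, then the set {h(f')} together with the hemispheres of the neighbors contains at least four pairwise non-antipodal open hemispheres. Consequently, in Case II of the algorithm (minimal covering set of size 6 consisting of three antipodal pairs), every facet of P contributing a hemisphere to the cover must be a parallelogram. -/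
open scoped RealInnerProductSpace

/-- The unit sphere `S² ⊆ ℝ³`. -/
noncomputable def unitSphere : Set (EuclideanSpace ℝ (Fin 3)) := Metric.sphere 0 1

/-- The open unit hemisphere of `S²` determined by a (unit) vector `v`;
for a facet `f` with outer unit normal `v` this is its set of blocking
directions `h(f)`. -/
noncomputable def openHemisphere (v : EuclideanSpace ℝ (Fin 3)) :
    Set (EuclideanSpace ℝ (Fin 3)) := {x ∈ unitSphere | 0 < ⟪v, x⟫}

/-- Two vectors are parallel if one is a scalar multiple of the other. -/
def ParallelVec (x y : EuclideanSpace ℝ (Fin 3)) : Prop := ∃ t : ℝ, y = t • x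

/-! Non-parallel vectors are distinct and non-antipodal. Four pairwise distinct, pairwise
non-antipodal vectors cannot lie in three antipodal pairs `{a, -a}, {b, -b}, {c, -c}`:
on a pairwise non-antipodal set the map `x ↦ {x, -x}` is injective, so by pigeonhole
such a set has at most as many elements as there are pairs. -/

theorem ne_of_not_parallelVec {x y : EuclideanSpace ℝ (Fin 3)} (h : ¬ ParallelVec x y) :
    x ≠ y := by
  rintro rfl
  exact h ⟨1, (one_smul ℝ x).symm⟩

theorem ne_neg_and_ne_neg_of_not_parallelVec {x y : EuclideanSpace ℝ (Fin 3)}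
    (h : ¬ ParallelVec x y) : x ≠ -y ∧ y ≠ -x := by
  constructor
  · rintro rfl
    exact h ⟨-1, by rw [neg_one_smul, neg_neg]⟩
  · rintro rfl
    exact h ⟨-1, (neg_one_smul ℝ x).symm⟩

theorem ncard_le_of_forall_mem_or_neg_mem {α : Type*} [InvolutiveNeg α] {S T : Set α}
    (hS : S.Pairwise fun x y => x ≠ -y) (hST : ∀ x ∈ S, x ∈ T ∨ -x ∈ T) (hT : T.Finite) :
    S.ncard ≤ T.ncard := by
  let antipodalPair : α → Set α := fun p => {p, -p}
  have hinj : S.InjOn antipodalPair := by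
    intro x hx y hy hxy
    rcases (hxy ▸ Set.mem_insert x _ : x ∈ antipodalPair y) with h | h
    · exact h
    · by_contra hne
      exact hS hx hy hne h
  have hmaps : antipodalPair '' S ⊆ antipodalPair '' T := by
    rintro _ ⟨x, hx, rfl⟩
    rcases hST x hx with h | h
    · exact ⟨x, h, rfl⟩
    · exact ⟨-x, h, by simp [antipodalPair, Set.pair_comm]⟩
  calc S.ncard = (antipodalPair '' S).ncard := hinj.ncard_image.symm
    _ ≤ (antipodalPair '' T).ncard := Set.ncard_le_ncard hmaps (hT.image _)
    _ ≤ T.ncard := Set.ncard_image_le hT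

theorem mem_or_neg_mem_of_mem_antipodal_pairs {α : Type*} [InvolutiveNeg α] {x a b c : α}
    (h : x ∈ ({a, -a, b, -b, c, -c} : Set α)) :
    x ∈ ({a, b, c} : Set α) ∨ -x ∈ ({a, b, c} : Set α) := by
  rcases h with rfl | rfl | rfl | rfl | rfl | rfl <;> simp

theorem ncard_triple_le {α : Type*} (a b c : α) : ({a, b, c} : Set α).ncard ≤ 3 := by
  grw [Set.ncard_insert_le, Set.ncard_insert_le, Set.ncard_singleton]

theorem nonparallel_neighbors_give_four_nonantipodal_general
    (v w₁ w₂ w₃ : EuclideanSpace ℝ (Fin 3))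
    (h12 : ¬ ParallelVec w₁ w₂) (h13 : ¬ ParallelVec w₁ w₃)
    (h23 : ¬ ParallelVec w₂ w₃)
    (hv1 : ¬ ParallelVec v w₁) (hv2 : ¬ ParallelVec v w₂)
    (hv3 : ¬ ParallelVec v w₃) :
    (({v, w₁, w₂, w₃} : Set (EuclideanSpace ℝ (Fin 3))).Pairwise
        fun x y => x ≠ -y) ∧
    ∀ a b c : EuclideanSpace ℝ (Fin 3),
      ¬ (({v, w₁, w₂, w₃} : Set (EuclideanSpace ℝ (Fin 3))) ⊆
          {a, -a, b, -b, c, -c}) := by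
  have hpair : ({v, w₁, w₂, w₃} : Set (EuclideanSpace ℝ (Fin 3))).Pairwise
      fun x y => x ≠ -y := by
    simp [Set.pairwise_insert, ne_neg_and_ne_neg_of_not_parallelVec h12,
      ne_neg_and_ne_neg_of_not_parallelVec h13, ne_neg_and_ne_neg_of_not_parallelVec h23,
      ne_neg_and_ne_neg_of_not_parallelVec hv1, ne_neg_and_ne_neg_of_not_parallelVec hv2,
      ne_neg_and_ne_neg_of_not_parallelVec hv3]
  refine ⟨hpair, fun a b c hsub => ?_⟩
  have hcard : ({v, w₁, w₂, w₃} : Set (EuclideanSpace ℝ (Fin 3))).ncard = 4 := by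
    rw [Set.ncard_insert_of_notMem, Set.ncard_insert_of_notMem,
      Set.ncard_pair (ne_of_not_parallelVec h23)] <;>
      simp [ne_of_not_parallelVec, *]
  have hle := ncard_le_of_forall_mem_or_neg_mem hpair
    (fun x hx => mem_or_neg_mem_of_mem_antipodal_pairs (hsub hx)) (Set.toFinite {a, b, c})
  have := ncard_triple_le a b c
  omega

/-- Let `v` be the outer unit normal of a facet `f'` and let `w₁, w₂, w₃` be
the outer unit normals of three pairwise non-parallel neighboring facets of
`f'` (none of which is parallel to `v`, since adjacent facets are not
coplanar).  Then the four hemispheres `h(f'), h(w₁), h(w₂), h(w₃)` are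
pairwise non-antipodal, and consequently these four normals cannot all belong
to three antipodal pairs of directions; hence in Case II of the algorithm
(a minimal cover of `S²` by six hemispheres, i.e. three antipodal pairs) every
contributing facet must be a parallelogram. -/
theorem nonparallel_neighbors_give_four_nonantipodal
    (v w₁ w₂ w₃ : EuclideanSpace ℝ (Fin 3))
    (hv : ‖v‖ = 1) (h1 : ‖w₁‖ = 1) (h2 : ‖w₂‖ = 1) (h3 : ‖w₃‖ = 1)
    (h12 : ¬ ParallelVec w₁ w₂) (h13 : ¬ ParallelVec w₁ w₃)
    (h23 : ¬ ParallelVec w₂ w₃)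
    (hv1 : ¬ ParallelVec v w₁) (hv2 : ¬ ParallelVec v w₂)
    (hv3 : ¬ ParallelVec v w₃) :
    (({v, w₁, w₂, w₃} : Set (EuclideanSpace ℝ (Fin 3))).Pairwise
        fun x y => x ≠ -y) ∧
    ∀ a b c : EuclideanSpace ℝ (Fin 3),
      ¬ (({v, w₁, w₂, w₃} : Set (EuclideanSpace ℝ (Fin 3))) ⊆
          {a, -a, b, -b, c, -c}) :=
  nonparallel_neighbors_give_four_nonantipodal_general v w₁ w₂ w₃ h12 h13 h23 hv1 hv2 hv3
end
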